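/- For λ ~ GPD(τ, ξ) with τ > 0, ξ > 1/2, the density π(κ|τ,ξ) of κ = 1/(1+λ²) satisfies lim_{κ→1⁻} π(κ|τ,ξ) = ∞ and lim_{κ→0⁺} π(κ|τ,ξ) = ∞. -/

import Mathlib

open Real Filter Topology Set

/-!
The density is `κ ^ (1/(2ξ) - 1) * (1 - κ) ^ (-1/2)` times a factor that is continuous and
positive on `[0, 1]`, because the base `τ √κ + ξ √(1 - κ)` of its denominator does not vanish
there. The factor `(1 - κ) ^ (-1/2)` blows up at `1` while `κ ^ (1/(2ξ) - 1) → 1`; at `0` the roles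
swap, and `κ ^ (1/(2ξ) - 1)` blows up precisely because `ξ > 1/2` makes the exponent negative.
-/

/-- Density of the random shrinkage coefficient `κ = 1/(1+λ²)` from the GLT prior. -/
noncomputable def kappaPdf (τ ξ κ : ℝ) : ℝ :=
  (τ ^ (1 / ξ) / 2) * (κ ^ (1 / (2 * ξ) - 1) * (1 - κ) ^ (-(1 / 2) : ℝ)) /
    (τ * κ ^ ((1 : ℝ) / 2) + ξ * (1 - κ) ^ ((1 : ℝ) / 2)) ^ (1 + 1 / ξ)

lemma tendsto_one_sub_nhdsLT_one : Tendsto (fun x : ℝ => 1 - x) (𝓝[<] 1) (𝓝[>] 0) := by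
  have hmaps : MapsTo (fun x : ℝ => 1 - x) (Iio 1) (Ioi 0) := fun _ hx => sub_pos.2 (mem_Iio.1 hx)
  simpa using (continuous_sub_left (1 : ℝ)).continuousWithinAt.tendsto_nhdsWithin (x := 1) hmaps

lemma tendsto_one_sub_rpow_nhdsLT_one {y : ℝ} (hy : y < 0) :
    Tendsto (fun x : ℝ => (1 - x) ^ y) (𝓝[<] 1) atTop :=
  (tendsto_rpow_neg_nhdsGT_zero hy).comp tendsto_one_sub_nhdsLT_one

section Normalizer

variable {τ ξ κ : ℝ}

noncomputable def kappaNormalizer (τ ξ κ : ℝ) : ℝ :=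
  τ ^ (1 / ξ) / 2 / (τ * κ ^ ((1 : ℝ) / 2) + ξ * (1 - κ) ^ ((1 : ℝ) / 2)) ^ (1 + 1 / ξ)

lemma kappaPdf_eq_kappaNormalizer_mul (τ ξ κ : ℝ) :
    kappaPdf τ ξ κ = kappaNormalizer τ ξ κ * (κ ^ (1 / (2 * ξ) - 1) * (1 - κ) ^ (-(1 / 2) : ℝ)) :=
  div_mul_eq_mul_div _ _ _ |>.symm

lemma kappaPdf_denom_base_pos (hτ : 0 < τ) (hξ : 0 < ξ) (hκ : κ ∈ Icc 0 1) :
    0 < τ * κ ^ ((1 : ℝ) / 2) + ξ * (1 - κ) ^ ((1 : ℝ) / 2) := by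
  rcases hκ.1.eq_or_lt with rfl | hκ0
  · simpa using hξ
  · have : 0 ≤ (1 - κ) ^ ((1 : ℝ) / 2) := rpow_nonneg (sub_nonneg.2 hκ.2) _
    positivity

lemma kappaNormalizer_pos (hτ : 0 < τ) (hξ : 0 < ξ) (hκ : κ ∈ Icc 0 1) :
    0 < kappaNormalizer τ ξ κ := by
  have := kappaPdf_denom_base_pos hτ hξ hκ
  unfold kappaNormalizer
  positivity

lemma continuousAt_kappaNormalizer (hτ : 0 < τ) (hξ : 0 < ξ) (hκ : κ ∈ Icc 0 1) :
    ContinuousAt (kappaNormalizer τ ξ) κ := by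
  have hbase : Continuous fun x : ℝ => τ * x ^ ((1 : ℝ) / 2) + ξ * (1 - x) ^ ((1 : ℝ) / 2) := by
    fun_prop (disch := norm_num)
  have hpos := kappaPdf_denom_base_pos hτ hξ hκ
  exact continuousAt_const.div (hbase.continuousAt.rpow_const (.inl hpos.ne'))
    (rpow_pos_of_pos hpos _).ne'

lemma tendsto_kappaPdf_atTop {s : Set ℝ} (hτ : 0 < τ) (hξ : 0 < ξ) (hκ : κ ∈ Icc 0 1)
    (h : Tendsto (fun x => x ^ (1 / (2 * ξ) - 1) * (1 - x) ^ (-(1 / 2) : ℝ)) (𝓝[s] κ) atTop) :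
    Tendsto (kappaPdf τ ξ) (𝓝[s] κ) atTop := by
  simp only [funext (kappaPdf_eq_kappaNormalizer_mul τ ξ)]
  exact ((continuousAt_kappaNormalizer hτ hξ hκ).tendsto.mono_left nhdsWithin_le_nhds).pos_mul_atTop
    (kappaNormalizer_pos hτ hξ hκ) h

end Normalizer

/-- The GLT shrinkage-coefficient density has infinite spikes at both `κ = 0` and `κ = 1`. -/
theorem kappa_density_spikes (τ ξ : ℝ) (hτ : 0 < τ) (hξ : 1 / 2 < ξ) :
    Tendsto (fun κ => kappaPdf τ ξ κ) (nhdsWithin 1 (Iio 1)) atTop ∧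
    Tendsto (fun κ => kappaPdf τ ξ κ) (nhdsWithin 0 (Ioi 0)) atTop := by
  have hξ0 : 0 < ξ := by linarith
  have hexp : 1 / (2 * ξ) - 1 < 0 := by
    rw [sub_neg, div_lt_one (by positivity)]
    linarith
  have hleft : Tendsto (fun x : ℝ => x ^ (1 / (2 * ξ) - 1)) (𝓝[<] 1) (𝓝 1) := by
    simpa using (continuousAt_rpow_const 1 _ (.inl one_ne_zero)).tendsto.mono_left
      nhdsWithin_le_nhds
  have hright : Tendsto (fun x : ℝ => (1 - x) ^ (-(1 / 2) : ℝ)) (𝓝[>] 0) (𝓝 1) := by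
    have : ContinuousAt (fun x : ℝ => (1 - x) ^ (-(1 / 2) : ℝ)) 0 :=
      (continuous_sub_left 1).continuousAt.rpow_const (.inl (by norm_num))
    simpa using this.tendsto.mono_left nhdsWithin_le_nhds
  exact ⟨tendsto_kappaPdf_atTop hτ hξ0 (right_mem_Icc.2 zero_le_one)
      (hleft.pos_mul_atTop one_pos (tendsto_one_sub_rpow_nhdsLT_one (by norm_num))),
    tendsto_kappaPdf_atTop hτ hξ0 (left_mem_Icc.2 zero_le_one)
      ((tendsto_rpow_neg_nhdsGT_zero hexp).atTop_mul_pos one_pos hright)⟩
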